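/- arXiv:1411.2935 — 5 statements merged into one kernel-verified Lean document; each statement's English description precedes it below -/
import Mathlib

section
/- Let r ≥ 0 be even and let l_1,…,l_r, θ_1,…,θ_r, L be real numbers. Then the trace of A(l_1,θ_1)·A(l_2,θ_2)⋯A(l_r,θ_r)·γ_L equals the sum over all subsets I ⊆ {1,…,r} of even cardinality of (−1)^{s(I)} · 2 · sin θ_I · cos θ_{Î} · cosh(L/2 − L_I). -/
open Finset

/-- The matrix `A(l,θ) = [[cos θ, −e^l sin θ], [−e^{−l} sin θ, −cos θ]]`. -/
noncomputable def Amat (l θ : ℝ) : Matrix (Fin 2) (Fin 2) ℝ :=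
  !![Real.cos θ, -Real.exp l * Real.sin θ; -Real.exp (-l) * Real.sin θ, -Real.cos θ]

/-- The matrix `γ_L = diag(e^{L/2}, e^{−L/2})`. -/
noncomputable def gammaMat (L : ℝ) : Matrix (Fin 2) (Fin 2) ℝ :=
  !![Real.exp (L / 2), 0; 0, Real.exp (-(L / 2))]

/-- The matrix `S(z) = diag(e^{z/2}, e^{−z/2})`. -/
noncomputable def Smat (z : ℝ) : Matrix (Fin 2) (Fin 2) ℝ :=
  !![Real.exp (z / 2), 0; 0, Real.exp (-(z / 2))]

/-- The matrix `D = diag(1, −1)`. -/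
def Dmat : Matrix (Fin 2) (Fin 2) ℝ := !![1, 0; 0, -1]

/-- Alternating length `L_I = Σ_{j=1}^k (−1)^j l_{i_j}` for `I = {i_1 < ⋯ < i_k}`. -/
def altLen {r : ℕ} (l : Fin r → ℝ) (I : Finset (Fin r)) : ℝ :=
  let s := (I.sort (· ≤ ·)).map l
  ∑ j ∈ Finset.range s.length, (-1 : ℝ) ^ (j + 1) * s.getD j 0

/-- Signature `s(I) = (i_2−i_1+1) + (i_4−i_3+1) + ⋯ + (i_k−i_{k−1}+1)` for `I` of even
cardinality, with `s(∅) = 0`. -/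
def sig {r : ℕ} (I : Finset (Fin r)) : ℕ :=
  let s := (I.sort (· ≤ ·)).map Fin.val
  ∑ m ∈ Finset.range (s.length / 2), (s.getD (2 * m + 1) 0 - s.getD (2 * m) 0 + 1)

/-- `P(k,n)`: the set of `n`-tuples of nonnegative integers summing to `k`. -/
def Pkn (k n : ℕ) : Finset (Fin n → ℕ) := Finset.Nat.antidiagonalTuple n k

/-- `B_{n,k,r}`: sum of multinomial coefficients `(k choose q)` over `q ∈ P(k,n)` whose
first `r` entries are odd and remaining entries are even. -/
def Bnkr (n k r : ℕ) : ℕ :=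
  ∑ q ∈ (Pkn k n).filter
      (fun q => ∀ i : Fin n, ((i : ℕ) < r → Odd (q i)) ∧ (r ≤ (i : ℕ) → Even (q i))),
    Nat.multinomial Finset.univ q

/-!
Write `D = diag(1, -1)`, `X = [[0, 1], [1, 0]]` and `S(z) = diag(e^{z/2}, e^{-z/2})`, so that
`γ_L = S(L)` and `A(l, θ) = cos θ • D - sin θ • S(l) X S(-l)`. Expanding the product, the term
in which `sin` is chosen exactly at the indices of `I` is collapsed with `X S(a) = S(-a) X`,
`D X = -X D` and `D S(a) = S(a) D` to `± S(-2 L_I) X^{|I|} D^{r-|I|}`. After multiplying by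
`S(L)` the trace vanishes for odd `|I|` (the matrix `S X D S` has zero diagonal), and equals
`2 cosh (L/2 - L_I)` for even `|I|`. The sign agrees with `(-1)^{s(I)}` because
`i_{2m} - i_{2m-1} ≡ i_{2m} + i_{2m-1} (mod 2)`.
-/

namespace Finset

theorem sort_insert_of_forall_le {α : Type*} [LinearOrder α] {s : Finset α} {a : α}
    (h : ∀ b ∈ s, b ≤ a) (ha : a ∉ s) : (insert a s).sort = s.sort ++ [a] := by
  have hl : (s.sort ++ [a]).toFinset = insert a s := by
    rw [List.toFinset_append, sort_toFinset]
    simp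
  rw [← hl, List.toFinset_sort]
  · exact List.pairwise_append.mpr ⟨pairwise_sort _ _, List.pairwise_singleton _ _,
      fun b hb c hc => (List.mem_singleton.mp hc) ▸ h b ((mem_sort _).mp hb)⟩
  · refine List.nodup_append.mpr ⟨sort_nodup _ _, List.nodup_singleton a, ?_⟩
    rintro b hb c hc rfl
    exact ha ((mem_sort _).mp ((List.mem_singleton.mp hc) ▸ hb))

theorem sort_map_castSuccEmb {r : ℕ} (J : Finset (Fin r)) :
    (J.map Fin.castSuccEmb).sort = J.sort.map Fin.castSucc :=
  (Fin.strictMono_castSucc.strictMonoOn _).map_finsetSort.symm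

theorem compl_map_castSuccEmb {r : ℕ} (J : Finset (Fin r)) :
    (J.map Fin.castSuccEmb)ᶜ = insert (Fin.last r) (Jᶜ.map Fin.castSuccEmb) := by
  ext a
  cases a using Fin.lastCases <;> simp

theorem compl_insert_last_map_castSuccEmb {r : ℕ} (J : Finset (Fin r)) :
    (insert (Fin.last r) (J.map Fin.castSuccEmb))ᶜ = Jᶜ.map Fin.castSuccEmb := by
  ext a
  cases a using Fin.lastCases <;> simp

end Finset

theorem Fin.sum_finsets_succ {M : Type*} [AddCommMonoid M] {r : ℕ}
    (f : Finset (Fin (r + 1)) → M) :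
    ∑ I, f I = ∑ J : Finset (Fin r),
      (f (J.map Fin.castSuccEmb) + f (insert (Fin.last r) (J.map Fin.castSuccEmb))) := by
  have inj := image_injOn_powerset_of_injOn (s := (univ : Finset (Fin r)))
    (Fin.castSuccEmb (n := r)).injective.injOn
  simp only [map_eq_image]
  rw [← powerset_univ, Fin.univ_castSuccEmb, cons_eq_insert, sum_powerset_insert (by simp),
    map_eq_image, powerset_image, sum_image inj, sum_image inj, ← sum_add_distrib, powerset_univ]

section AlternatingSums

variable {R : Type*} [Ring R]

def altSum (s : List R) : R :=
  ∑ j ∈ range s.length, (-1) ^ (j + 1) * s.getD j 0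

theorem altSum_concat (s : List R) (x : R) :
    altSum (s ++ [x]) = altSum s + (-1) ^ (s.length + 1) * x := by
  rw [altSum, List.length_append, List.length_singleton, sum_range_succ,
    List.getD_append_right _ _ _ _ le_rfl, Nat.sub_self]
  congr 1
  exact sum_congr rfl fun j hj => by rw [List.getD_append _ _ _ _ (mem_range.mp hj)]

end AlternatingSums

theorem altLen_eq_altSum {r : ℕ} (l : Fin r → ℝ) (I : Finset (Fin r)) :
    altLen l I = altSum (I.sort.map l) := rfl

theorem altLen_map_castSuccEmb {r : ℕ} (l : Fin (r + 1) → ℝ) (J : Finset (Fin r)) :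
    altLen l (J.map Fin.castSuccEmb) = altLen (fun i => l i.castSucc) J := by
  rw [altLen_eq_altSum, altLen_eq_altSum, sort_map_castSuccEmb, List.map_map]
  rfl

theorem altLen_insert_last {r : ℕ} (l : Fin (r + 1) → ℝ) (J : Finset (Fin r)) :
    altLen l (insert (Fin.last r) (J.map Fin.castSuccEmb)) =
      altLen (fun i => l i.castSucc) J + (-1) ^ (#J + 1) * l (Fin.last r) := by
  rw [altLen_eq_altSum, altLen_eq_altSum,
    sort_insert_of_forall_le (fun b _ => Fin.le_last b) (by simp), sort_map_castSuccEmb,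
    List.map_append, List.map_map, List.map_singleton, altSum_concat]
  simp only [List.length_map, length_sort, add_left_inj]
  rfl

def pairGapSum (s : List ℕ) : ℕ :=
  ∑ m ∈ range (s.length / 2), (s.getD (2 * m + 1) 0 - s.getD (2 * m) 0 + 1)

theorem pairGapSum_cons_cons (a b : ℕ) (s : List ℕ) :
    pairGapSum (a :: b :: s) = pairGapSum s + (b - a + 1) := by
  rw [pairGapSum, List.length_cons, List.length_cons,
    show (s.length + 1 + 1) / 2 = s.length / 2 + 1 by omega, sum_range_succ']
  simp [pairGapSum, Nat.mul_succ]

theorem pairGapSum_mod_two : ∀ s : List ℕ, s.Pairwise (· ≤ ·) → Even s.length →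
    pairGapSum s % 2 = (s.sum + s.length / 2) % 2
  | [], _, _ => rfl
  | [_], _, h => absurd h (by simp)
  | a :: b :: s, hs, h => by
    have hab : a ≤ b := List.rel_of_pairwise_cons hs List.mem_cons_self
    have ih := pairGapSum_mod_two s hs.of_cons.of_cons (by simpa [parity_simps] using h)
    rw [pairGapSum_cons_cons, List.sum_cons, List.sum_cons, List.length_cons, List.length_cons]
    omega

theorem sig_eq_pairGapSum {r : ℕ} (I : Finset (Fin r)) :
    sig I = pairGapSum (I.sort.map Fin.val) := rfl

theorem even_sig_iff {r : ℕ} {I : Finset (Fin r)} (hI : Even #I) :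
    Even (sig I) ↔ Even (∑ i ∈ I, (i : ℕ) + (#I + 1).choose 2) := by
  obtain ⟨t, ht⟩ := hI
  have hsum : (I.sort.map Fin.val).sum = ∑ i ∈ I, (i : ℕ) := by
    rw [← Multiset.sum_coe, ← Multiset.map_coe, sort_eq]
    rfl
  have hmod := pairGapSum_mod_two (I.sort.map Fin.val)
    ((pairwise_sort I _).map _ fun _ _ h => h) (by simp [ht])
  rw [List.length_map, length_sort, hsum] at hmod
  have hchoose : (#I + 1).choose 2 = 2 * (t * t) + t := by
    rw [Nat.choose_two_right, ht, Nat.add_sub_cancel]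
    exact Nat.div_eq_of_eq_mul_left two_pos (by ring)
  rw [sig_eq_pairGapSum, Nat.even_iff, Nat.even_iff, hmod, hchoose, ht]
  omega

section Involution

variable {M : Type*} [Monoid M] {a : M}

theorem pow_eq_one_of_mul_self_eq_one (ha : a * a = 1) {k : ℕ} (hk : Even k) : a ^ k = 1 := by
  obtain ⟨t, rfl⟩ := hk
  rw [← two_mul, pow_mul, sq, ha, one_pow]

theorem pow_eq_self_of_mul_self_eq_one (ha : a * a = 1) {k : ℕ} (hk : Odd k) : a ^ k = a := by
  obtain ⟨t, rfl⟩ := hk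
  rw [pow_succ, pow_eq_one_of_mul_self_eq_one ha (even_two_mul t), one_mul]

end Involution

def Xmat : Matrix (Fin 2) (Fin 2) ℝ := !![0, 1; 1, 0]

theorem Smat_add (a b : ℝ) : Smat (a + b) = Smat a * Smat b := by
  simp only [Smat, Matrix.mul_fin_two, ← Real.exp_add, mul_zero, zero_mul, add_zero]
  ring_nf

theorem Smat_zero : Smat 0 = 1 := by
  simp [Smat, Matrix.one_fin_two]

theorem Xmat_mul_Smat (a : ℝ) : Xmat * Smat a = Smat (-a) * Xmat := by
  simp [Xmat, Smat, neg_div]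

theorem Dmat_commute_Smat (a : ℝ) : Commute Dmat (Smat a) := by
  simp [Commute, SemiconjBy, Dmat, Smat]

theorem Dmat_mul_Xmat : Dmat * Xmat = -(Xmat * Dmat) := by
  simp [Dmat, Xmat]

theorem Xmat_mul_self : Xmat * Xmat = 1 := by
  simp [Xmat, Matrix.one_fin_two]

theorem Dmat_mul_self : Dmat * Dmat = 1 := by
  simp [Dmat, Matrix.one_fin_two]

theorem Amat_eq (l θ : ℝ) :
    Amat l θ = Real.cos θ • Dmat - Real.sin θ • (Smat l * Xmat * Smat (-l)) := by
  ext i j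
  fin_cases i <;> fin_cases j <;>
    simp [Amat, Dmat, Smat, Xmat, ← Real.exp_add] <;> ring_nf

theorem Xmat_pow_mul_Smat (k : ℕ) (a : ℝ) :
    Xmat ^ k * Smat a = Smat ((-1) ^ k * a) * Xmat ^ k := by
  induction k generalizing a with
  | zero => simp
  | succ n ih =>
    rw [pow_succ, mul_assoc, Xmat_mul_Smat, ← mul_assoc, ih, mul_assoc, ← pow_succ,
      pow_succ (-1 : ℝ), mul_neg_one, neg_mul, mul_neg]

theorem Dmat_pow_mul_Xmat (m : ℕ) : Dmat ^ m * Xmat = (-1 : ℝ) ^ m • (Xmat * Dmat ^ m) := by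
  induction m with
  | zero => simp
  | succ n ih =>
    rw [pow_succ, mul_assoc, Dmat_mul_Xmat, mul_neg, ← mul_assoc, ih, smul_mul_assoc, mul_assoc,
      ← pow_succ, pow_succ (-1 : ℝ), mul_neg_one, neg_smul]

theorem Smat_mul_Xmat_pow_mul_Dmat_pow_mul_conj (w c : ℝ) (k m : ℕ) :
    Smat w * Xmat ^ k * Dmat ^ m * (Smat c * Xmat * Smat (-c)) =
      (-1 : ℝ) ^ m • (Smat (w + 2 * (-1) ^ k * c) * Xmat ^ (k + 1) * Dmat ^ m) := by
  have hD (a : ℝ) : Dmat ^ m * Smat a = Smat a * Dmat ^ m := ((Dmat_commute_Smat a).pow_left m).eq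
  calc Smat w * Xmat ^ k * Dmat ^ m * (Smat c * Xmat * Smat (-c))
      = Smat w * (Xmat ^ k * Smat c) * (Dmat ^ m * Xmat) * Smat (-c) := by
        rw [← mul_assoc, ← mul_assoc, mul_assoc _ (Dmat ^ m), hD]
        simp only [mul_assoc]
    _ = (-1 : ℝ) ^ m •
          (Smat w * Smat ((-1) ^ k * c) * Xmat ^ (k + 1) * (Dmat ^ m * Smat (-c))) := by
        rw [Xmat_pow_mul_Smat, Dmat_pow_mul_Xmat, mul_smul_comm, smul_mul_assoc]
        simp only [mul_assoc, pow_succ]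
    _ = (-1 : ℝ) ^ m • (Smat (w + (-1) ^ k * c) * (Xmat ^ (k + 1) * Smat (-c)) * Dmat ^ m) := by
        rw [hD, Smat_add]
        simp only [mul_assoc]
    _ = (-1 : ℝ) ^ m • (Smat (w + 2 * (-1) ^ k * c) * Xmat ^ (k + 1) * Dmat ^ m) := by
        rw [Xmat_pow_mul_Smat, ← mul_assoc, ← Smat_add, pow_succ]
        ring_nf

theorem trace_Smat_mul_Smat (a b : ℝ) :
    Matrix.trace (Smat a * Smat b) = 2 * Real.cosh ((a + b) / 2) := by
  rw [← Smat_add, Smat, Matrix.trace_fin_two_of, Real.cosh_eq]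
  ring

theorem trace_Smat_mul_Xmat_mul_Dmat_mul_Smat (a b : ℝ) :
    Matrix.trace (Smat a * Xmat * Dmat * Smat b) = 0 := by
  simp [Smat, Xmat, Dmat, Matrix.trace_fin_two]

/-- The sign records that `sin θ_i` enters with the sign `-(-1) ^ (i + j)` when `i` is the
`j`-th element of `I` (both counted from `0`). As `D ^ 2 = 1`, the factor `D ^ (r + #I)` is
`D ^ (r - #I)` without truncated subtraction. -/
noncomputable def prodTerm {r : ℕ} (l θ : Fin r → ℝ) (I : Finset (Fin r)) :
    Matrix (Fin 2) (Fin 2) ℝ :=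
  ((-1 : ℝ) ^ (∑ i ∈ I, (i : ℕ) + (#I + 1).choose 2) * (∏ i ∈ I, Real.sin (θ i)) *
      ∏ i ∈ Iᶜ, Real.cos (θ i)) •
    (Smat (-2 * altLen l I) * Xmat ^ #I * Dmat ^ (r + #I))

theorem prodTerm_map_castSuccEmb {r : ℕ} (l θ : Fin (r + 1) → ℝ) (J : Finset (Fin r)) :
    prodTerm l θ (J.map Fin.castSuccEmb) =
      prodTerm (fun i => l i.castSucc) (fun i => θ i.castSucc) J *
        (Real.cos (θ (Fin.last r)) • Dmat) := by
  rw [prodTerm, prodTerm, compl_map_castSuccEmb, prod_insert (by simp), prod_map, prod_map,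
    sum_map, card_map, altLen_map_castSuccEmb, smul_mul_smul_comm, mul_assoc _ _ Dmat, ← pow_succ,
    add_right_comm r 1]
  congr 1
  simp only [Fin.castSuccEmb_apply, Fin.val_castSucc]
  ring

theorem prodTerm_insert_last {r : ℕ} (l θ : Fin (r + 1) → ℝ) (J : Finset (Fin r)) :
    prodTerm l θ (insert (Fin.last r) (J.map Fin.castSuccEmb)) =
      prodTerm (fun i => l i.castSucc) (fun i => θ i.castSucc) J *
        (-Real.sin (θ (Fin.last r)) •
          (Smat (l (Fin.last r)) * Xmat * Smat (-l (Fin.last r)))) := by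
  have hlast : Fin.last r ∉ J.map Fin.castSuccEmb := by simp
  rw [prodTerm, prodTerm, compl_insert_last_map_castSuccEmb, prod_insert hlast, sum_insert hlast,
    card_insert_of_notMem hlast, prod_map, prod_map, sum_map, card_map, altLen_insert_last,
    smul_mul_smul_comm, Smat_mul_Xmat_pow_mul_Dmat_pow_mul_conj, smul_smul,
    show r + 1 + (#J + 1) = (r + #J) + 2 by ring, pow_add Dmat, sq, Dmat_mul_self, mul_one]
  congr 1
  · have hc : (#J + 1 + 1).choose 2 = (#J + 1).choose 2 + (#J + 1) := by
      rw [Nat.choose_succ_succ', Nat.choose_one_right, add_comm]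
    simp only [Fin.castSuccEmb_apply, Fin.val_castSucc, Fin.val_last]
    rw [show r + ∑ i ∈ J, (i : ℕ) + (#J + 1 + 1).choose 2 =
        ∑ i ∈ J, (i : ℕ) + (#J + 1).choose 2 + 1 + (r + #J) by omega, pow_add, pow_succ]
    ring
  · rw [pow_succ (-1 : ℝ)]
    ring_nf

theorem list_prod_Amat_eq_sum_prodTerm (r : ℕ) (l θ : Fin r → ℝ) :
    (List.ofFn fun i => Amat (l i) (θ i)).prod = ∑ I, prodTerm l θ I := by
  induction r with
  | zero =>
    rw [Fintype.sum_subsingleton _ ∅]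
    simp [prodTerm, altLen, Smat_zero]
  | succ r ih =>
    rw [List.ofFn_succ', List.prod_concat, ih, Fin.sum_finsets_succ, sum_mul]
    refine sum_congr rfl fun J _ => ?_
    rw [prodTerm_map_castSuccEmb, prodTerm_insert_last, ← mul_add, Amat_eq, sub_eq_add_neg,
      neg_smul]

/-- trace formula for even `r`, in `cosh` form. -/
theorem trace_prod_eq_sum_even_subsets_of_even (r : ℕ) (hr : Even r)
    (l θ : Fin r → ℝ) (L : ℝ) :
    Matrix.trace ((List.ofFn fun i : Fin r => Amat (l i) (θ i)).prod * gammaMat L) =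
      ∑ I ∈ Finset.univ.filter (fun I : Finset (Fin r) => Even I.card),
        (-1 : ℝ) ^ sig I * 2 * (∏ i ∈ I, Real.sin (θ i)) * (∏ i ∈ Iᶜ, Real.cos (θ i)) *
          Real.cosh (L / 2 - altLen l I) := by
  rw [list_prod_Amat_eq_sum_prodTerm, show gammaMat L = Smat L from rfl, sum_mul,
    Matrix.trace_sum, sum_filter]
  refine sum_congr rfl fun I _ => ?_
  rw [prodTerm, smul_mul_assoc, Matrix.trace_smul, smul_eq_mul]
  split_ifs with hI
  · rw [pow_eq_one_of_mul_self_eq_one Xmat_mul_self hI,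
      pow_eq_one_of_mul_self_eq_one Dmat_mul_self (hr.add hI), mul_one, mul_one,
      trace_Smat_mul_Smat, neg_one_pow_congr (even_sig_iff hI),
      show (-2 * altLen l I + L) / 2 = L / 2 - altLen l I by ring]
    ring
  · have hodd : Odd #I := Nat.not_even_iff_odd.mp hI
    rw [pow_eq_self_of_mul_self_eq_one Xmat_mul_self hodd,
      pow_eq_self_of_mul_self_eq_one Dmat_mul_self (hr.add_odd hodd),
      trace_Smat_mul_Xmat_mul_Dmat_mul_Smat, mul_zero]
end

section
/- Let r ≥ 0 and let l_1,…,l_r, θ_1,…,θ_r be real numbers. Then the (2,2) entry of the matrix product A(l_1,θ_1)·A(l_2,θ_2)⋯A(l_r,θ_r) equals the sum over all subsets I ⊆ {1,…,r} of even cardinality of (−1)^{r + s(I)} · sin θ_I · cos θ_{Î} · e^{L_I}. -/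
open Finset

/-!
Expanding the product entrywise writes the `(2,2)` entry as a sum over walks on the two states
`1, 2` (the indices `0, 1 : Fin 2`) that start and end in state `2`. Such a walk is determined by the set `I` of steps at which it
switches state, and it closes up exactly when `#I` is even. A switching step `i` contributes
`-e^{±l_i} sin θ_i`, the sign in the exponent alternating along `I`, which gives `e^{L_I}`; a
non-switching step contributes `cos θ_i` in state `1` and `-cos θ_i` in state `2`. The total sign
is therefore `(-1)^r` times `(-1)` to the number of non-switching steps spent in state `1`, and
modulo `2` that number agrees with `s(I)`: both are `∑_{i ∈ I} i + #I / 2`.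
-/

open Fin.NatCast

section SwitchPath

variable {n : ℕ}

def countBelow (I : Finset (Fin n)) (m : ℕ) : ℕ := #{i ∈ I | i.val < m}

/-- The walk on the states `Fin 2` that starts at `a` and switches state exactly at the steps
in `I`; `switchPath a I m` is the state before step `m`. -/
def switchPath (a : Fin 2) (I : Finset (Fin n)) (m : ℕ) : Fin 2 := a + (countBelow I m : Fin 2)

lemma countBelow_of_le (I : Finset (Fin n)) {m : ℕ} (h : n ≤ m) : countBelow I m = #I := by
  rw [countBelow, filter_true_of_mem fun i _ ↦ i.isLt.trans_le h]

lemma last_notMem_map_castSuccEmb (I : Finset (Fin n)) :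
    Fin.last n ∉ I.map Fin.castSuccEmb := by
  simp [Fin.castSucc_ne_last]

def snocFinset (I : Finset (Fin n)) (t : Bool) : Finset (Fin (n + 1)) :=
  if t then cons (Fin.last n) (I.map Fin.castSuccEmb) (last_notMem_map_castSuccEmb I)
  else I.map Fin.castSuccEmb

lemma last_mem_snocFinset_iff (I : Finset (Fin n)) (t : Bool) :
    Fin.last n ∈ snocFinset I t ↔ t = true := by
  cases t <;> simp [snocFinset]

lemma snocFinset_castSucc_mem_iff (I : Finset (Fin n)) (t : Bool) (i : Fin n) :
    i.castSucc ∈ snocFinset I t ↔ i ∈ I := by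
  cases t <;> simp [snocFinset, Fin.castSucc_ne_last]

lemma bijective_snocFinset :
    Function.Bijective fun p : Finset (Fin n) × Bool ↦ snocFinset p.1 p.2 := by
  rw [Fintype.bijective_iff_injective_and_card]
  refine ⟨fun ⟨I, t⟩ ⟨J, u⟩ h ↦ ?_, by simp [Fintype.card_finset, pow_succ]⟩
  have h : snocFinset I t = snocFinset J u := h
  have htu : t = u := Bool.coe_iff_coe.mp <| by
    rw [← last_mem_snocFinset_iff I, ← last_mem_snocFinset_iff J, h]
  have hIJ : I = J := by
    ext i; rw [← snocFinset_castSucc_mem_iff I t, ← snocFinset_castSucc_mem_iff J u, h]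
  rw [hIJ, htu]

lemma countBelow_snocFinset_of_le (I : Finset (Fin n)) (t : Bool) {m : ℕ} (hm : m ≤ n) :
    countBelow (snocFinset I t) m = countBelow I m := by
  have hmap : countBelow (I.map Fin.castSuccEmb) m = countBelow I m := by
    simp only [countBelow, filter_map, card_map]
    rfl
  cases t
  · exact hmap
  · rw [← hmap, countBelow, countBelow, snocFinset, if_pos rfl, filter_cons_of_neg]
    simpa using hm

lemma switchPath_snocFinset_of_le (a : Fin 2) (I : Finset (Fin n)) (t : Bool) {m : ℕ}
    (hm : m ≤ n) : switchPath a (snocFinset I t) m = switchPath a I m := by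
  rw [switchPath, switchPath, countBelow_snocFinset_of_le I t hm]

lemma switchPath_snocFinset_succ (a : Fin 2) (I : Finset (Fin n)) (t : Bool) :
    switchPath a (snocFinset I t) (n + 1) = switchPath a I n + if t then 1 else 0 := by
  rw [switchPath, switchPath, countBelow_of_le _ le_rfl, countBelow_of_le _ le_rfl, add_assoc]
  cases t <;> simp [snocFinset]

variable {R : Type*} [CommSemiring R]

lemma list_prod_ofFn_apply (M : Fin n → Matrix (Fin 2) (Fin 2) R) (a b : Fin 2) :
    (List.ofFn M).prod a b = ∑ I : Finset (Fin n),
      if switchPath a I n = b then ∏ i, M i (switchPath a I i) (switchPath a I (i + 1))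
      else 0 := by
  induction n generalizing b with
  | zero => simp [Matrix.one_apply, switchPath, countBelow]
  | succ n ih =>
    rw [List.ofFn_succ', List.prod_concat, Matrix.mul_apply]
    simp_rw [ih, sum_mul]
    rw [sum_comm, ← bijective_snocFinset.sum_comp, Fintype.sum_prod_type]
    refine sum_congr rfl fun I _ ↦ ?_
    have hprod (t : Bool) : ∏ i : Fin (n + 1),
        M i (switchPath a (snocFinset I t) i) (switchPath a (snocFinset I t) (i + 1)) =
        (∏ i : Fin n, M i.castSucc (switchPath a I i) (switchPath a I (i + 1))) *
          M (Fin.last n) (switchPath a I n) (switchPath a I n + if t then 1 else 0) := by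
      rw [Fin.prod_univ_castSucc, Fin.val_last, switchPath_snocFinset_of_le a I t le_rfl,
        switchPath_snocFinset_succ]
      congr 1
      refine prod_congr rfl fun i _ ↦ ?_
      rw [Fin.val_castSucc, switchPath_snocFinset_of_le a I t i.isLt.le,
        switchPath_snocFinset_of_le a I t i.isLt]
    simp only [hprod, switchPath_snocFinset_succ, Fintype.sum_bool]
    generalize switchPath a I n = s
    fin_cases s <;> fin_cases b <;> simp

end SwitchPath

section Rank

variable {n : ℕ} (I : Finset (Fin n))

lemma countBelow_orderEmbOfFin (j : Fin #I) : countBelow I (I.orderEmbOfFin rfl j) = j := by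
  have h := filter_map (s := univ) (f := (I.orderEmbOfFin rfl).toEmbedding)
    (p := fun i ↦ i.val < I.orderEmbOfFin rfl j)
  rw [map_orderEmbOfFin_univ] at h
  rw [countBelow, h, card_map]
  simp only [Function.comp_def, RelEmbedding.coe_toEmbedding, ← Fin.lt_def,
    OrderEmbedding.lt_iff_lt, filter_gt_eq_Iio, Fin.card_Iio]

lemma sum_orderEmbOfFin_eq_sum_countBelow {M : Type*} [AddCommMonoid M] (f : ℕ → Fin n → M) :
    ∑ j : Fin #I, f j (I.orderEmbOfFin rfl j) = ∑ i ∈ I, f (countBelow I i) i := by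
  have h := sum_map univ (I.orderEmbOfFin rfl).toEmbedding fun i ↦ f (countBelow I i) i
  rw [map_orderEmbOfFin_univ] at h
  simp only [h, RelEmbedding.coe_toEmbedding, countBelow_orderEmbOfFin]

lemma getD_map_sort {α : Type*} (f : Fin n → α) (j : Fin #I) (d : α) :
    ((I.sort (· ≤ ·)).map f).getD j d = f (I.orderEmbOfFin rfl j) := by
  rw [List.getD_eq_getElem _ _ (by simp), List.getElem_map, orderEmbOfFin_apply]
  rfl

lemma altLen_eq_sum_countBelow (l : Fin n → ℝ) :
    altLen l I = ∑ i ∈ I, (-1) ^ (countBelow I i + 1) * l i := by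
  rw [← sum_orderEmbOfFin_eq_sum_countBelow I fun m i ↦ (-1) ^ (m + 1) * l i, altLen,
    List.length_map, length_sort, ← Fin.sum_univ_eq_sum_range]
  simp only [getD_map_sort]

end Rank

section Parity

lemma neg_one_pow_eq_neg_one_pow_of_natCast_eq {R : Type*} [Ring R]
    {a b : ℕ} (h : (a : ZMod 2) = b) : (-1 : R) ^ a = (-1) ^ b := by
  rw [neg_one_pow_eq_pow_mod_two, (ZMod.natCast_eq_natCast_iff' a b 2).mp h,
    ← neg_one_pow_eq_pow_mod_two]

lemma sum_range_two_mul {M : Type*} [AddCommMonoid M] (f : ℕ → M) (c : ℕ) :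
    ∑ j ∈ range (2 * c), f j = ∑ m ∈ range c, (f (2 * m) + f (2 * m + 1)) := by
  induction c with
  | zero => simp
  | succ c ih => rw [mul_add_one, sum_range_succ, sum_range_succ, sum_range_succ, ih, add_assoc]

lemma natCast_sum_range_two_mul (c : ℕ) : ((∑ j ∈ range (2 * c), j : ℕ) : ZMod 2) = c := by
  rw [sum_range_two_mul]
  push_cast
  reduce_mod_char
  simp

variable {n : ℕ} (I : Finset (Fin n))

lemma natCast_sig (hI : Even #I) :
    (sig I : ZMod 2) = ∑ i ∈ I, ((i : ℕ) : ZMod 2) + (#I / 2 : ℕ) := by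
  obtain ⟨c, hc⟩ := hI
  have hsum : ∑ i ∈ I, ((i : ℕ) : ZMod 2) =
      ∑ j ∈ range (2 * c), ((((I.sort (· ≤ ·)).map Fin.val).getD j 0 : ℕ) : ZMod 2) := by
    rw [show 2 * c = #I by omega, ← Fin.sum_univ_eq_sum_range,
      ← sum_orderEmbOfFin_eq_sum_countBelow I fun _ i ↦ ((i : ℕ) : ZMod 2)]
    simp only [getD_map_sort]
  simp only [sig, List.length_map, length_sort, hc, show (c + c) / 2 = c by omega]
  rw [hsum, sum_range_two_mul]
  set g : ℕ → ℕ := fun j ↦ ((I.sort (· ≤ ·)).map Fin.val).getD j 0 with hg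
  have hmono (m : ℕ) (hm : m < c) : g (2 * m) ≤ g (2 * m + 1) := by
    simp only [hg, getD_map_sort I Fin.val ⟨2 * m, by omega⟩,
      getD_map_sort I Fin.val ⟨2 * m + 1, by omega⟩]
    exact (I.orderEmbOfFin rfl).monotone (Fin.mk_le_mk.mpr (by omega))
  have hc_sum : (c : ZMod 2) = ∑ _m ∈ range c, 1 := by simp
  rw [Nat.cast_sum, hc_sum, ← sum_add_distrib]
  refine sum_congr rfl fun m hm ↦ ?_
  rw [Nat.cast_add, Nat.cast_sub (hmono m (mem_range.mp hm)), CharTwo.sub_eq_add, Nat.cast_one,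
    add_comm (g (2 * m + 1) : ZMod 2)]

lemma sum_countBelow_univ : ∑ i : Fin n, countBelow I i = ∑ j ∈ I, (n - 1 - j) := by
  simp only [countBelow, card_filter]
  rw [sum_comm]
  refine sum_congr rfl fun j _ ↦ ?_
  rw [← card_filter]
  simp only [← Fin.lt_def, filter_lt_eq_Ioi, Fin.card_Ioi]

lemma natCast_sum_countBelow_compl (hI : Even #I) :
    ((∑ i ∈ Iᶜ, countBelow I i : ℕ) : ZMod 2) =
      ∑ i ∈ I, ((i : ℕ) : ZMod 2) + (#I / 2 : ℕ) := by
  obtain ⟨c, hc⟩ := hI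
  have hself : ∑ i ∈ I, countBelow I i = ∑ j ∈ range (2 * c), j := by
    rw [← sum_orderEmbOfFin_eq_sum_countBelow I fun m _ ↦ m,
      Fin.sum_univ_eq_sum_range (fun j ↦ j), hc, two_mul]
  have hsplit := sum_compl_add_sum I fun i ↦ countBelow I i
  rw [sum_countBelow_univ, hself] at hsplit
  have hterm (j : ℕ) (hj : j < n) : ((n - 1 - j : ℕ) : ZMod 2) = n + 1 + j := by
    rw [Nat.cast_sub (by omega), Nat.cast_sub (by omega)]
    ring_nf
    reduce_mod_char
  have hcast : ((∑ i ∈ Iᶜ, countBelow I i : ℕ) : ZMod 2) + c =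
      ∑ j ∈ I, ((n : ZMod 2) + 1 + ((j : ℕ) : ZMod 2)) := by
    rw [← natCast_sum_range_two_mul c, ← Nat.cast_add, hsplit, Nat.cast_sum]
    exact sum_congr rfl fun j _ ↦ hterm j j.isLt
  rw [sum_add_distrib, sum_const, hc, nsmul_eq_mul, Nat.cast_add] at hcast
  rw [hc, show (c + c) / 2 = c by omega]
  linear_combination (norm := ring_nf) hcast
  reduce_mod_char

lemma prod_compl_neg_one_pow_countBelow (hI : Even #I) :
    ∏ i ∈ Iᶜ, (-1 : ℝ) ^ countBelow I i = (-1) ^ sig I := by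
  rw [prod_pow_eq_pow_sum]
  exact neg_one_pow_eq_neg_one_pow_of_natCast_eq
    ((natCast_sum_countBelow_compl I hI).trans (natCast_sig I hI).symm)

end Parity

section PathWeight

variable {n : ℕ} (I : Finset (Fin n))

lemma countBelow_succ_of_mem {i : Fin n} (hi : i ∈ I) :
    countBelow I (i + 1) = countBelow I i + 1 := by
  rw [countBelow, countBelow,
    ← card_insert_of_notMem (s := {j ∈ I | j.val < i.val}) (a := i) (by simp)]
  congr 1
  ext j
  simp only [mem_filter, mem_insert, Nat.lt_succ_iff_lt_or_eq, Fin.val_inj]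
  aesop

lemma countBelow_succ_of_notMem {i : Fin n} (hi : i ∉ I) :
    countBelow I (i + 1) = countBelow I i := by
  rw [countBelow, countBelow]
  congr 1
  ext j
  simp only [mem_filter, Nat.lt_succ_iff_lt_or_eq, Fin.val_inj]
  aesop

lemma natCast_fin_two_of_even {m : ℕ} (hm : Even m) : (m : Fin 2) = 0 :=
  Fin.natCast_eq_zero.mpr (even_iff_two_dvd.mp hm)

lemma natCast_fin_two_of_odd {m : ℕ} (hm : Odd m) : (m : Fin 2) = 1 := by
  obtain ⟨k, rfl⟩ := hm
  simp [natCast_fin_two_of_even (even_two_mul k)]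

lemma Amat_switchPath_of_mem (l θ : ℝ) {i : Fin n} (hi : i ∈ I) :
    Amat l θ (switchPath 1 I i) (switchPath 1 I (i + 1)) =
      -(Real.exp ((-1) ^ (countBelow I i + 1) * l) * Real.sin θ) := by
  rw [switchPath, switchPath, countBelow_succ_of_mem I hi]
  rcases Nat.even_or_odd (countBelow I i) with h | h
  · simp [natCast_fin_two_of_even h, natCast_fin_two_of_odd h.add_one, h.add_one.neg_one_pow,
      Amat]
  · simp [natCast_fin_two_of_odd h, natCast_fin_two_of_even h.add_one, h.add_one.neg_one_pow,
      Amat]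

lemma Amat_switchPath_of_notMem (l θ : ℝ) {i : Fin n} (hi : i ∉ I) :
    Amat l θ (switchPath 1 I i) (switchPath 1 I (i + 1)) =
      (-1) ^ countBelow I i * -Real.cos θ := by
  rw [switchPath, switchPath, countBelow_succ_of_notMem I hi]
  rcases Nat.even_or_odd (countBelow I i) with h | h
  · simp [natCast_fin_two_of_even h, h.neg_one_pow, Amat]
  · simp [natCast_fin_two_of_odd h, h.neg_one_pow, Amat]

lemma prod_Amat_switchPath (l θ : Fin n → ℝ) (hI : Even #I) :
    ∏ i, Amat (l i) (θ i) (switchPath 1 I i) (switchPath 1 I (i + 1)) =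
      (-1) ^ (n + sig I) * (∏ i ∈ I, Real.sin (θ i)) * (∏ i ∈ Iᶜ, Real.cos (θ i)) *
        Real.exp (altLen l I) := by
  rw [← prod_mul_prod_compl I, prod_congr rfl fun i hi ↦ Amat_switchPath_of_mem I _ _ hi,
    prod_congr rfl fun i hi ↦ Amat_switchPath_of_notMem I _ _ (mem_compl.mp hi)]
  have hsin : ∏ i ∈ I, -(Real.exp ((-1) ^ (countBelow I i + 1) * l i) * Real.sin (θ i)) =
      (-1) ^ #I * Real.exp (altLen l I) * ∏ i ∈ I, Real.sin (θ i) := by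
    rw [prod_neg, prod_mul_distrib, altLen_eq_sum_countBelow, Real.exp_sum, mul_assoc]
  have hcos : ∏ i ∈ Iᶜ, (-1) ^ countBelow I i * -Real.cos (θ i) =
      (-1) ^ sig I * (-1) ^ #Iᶜ * ∏ i ∈ Iᶜ, Real.cos (θ i) := by
    rw [prod_mul_distrib, prod_compl_neg_one_pow_countBelow I hI, prod_neg, mul_assoc]
  have hsign : (-1 : ℝ) ^ n = (-1) ^ #I * (-1) ^ #Iᶜ := by
    rw [← pow_add, card_add_card_compl, Fintype.card_fin]
  rw [hsin, hcos, pow_add, hsign]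
  ring

end PathWeight

/-- the (2,2) entry of `A(l_1,θ_1)⋯A(l_r,θ_r)`. -/
theorem entry_two_two_prod (r : ℕ) (l θ : Fin r → ℝ) :
    ((List.ofFn fun i : Fin r => Amat (l i) (θ i)).prod) 1 1 =
      ∑ I ∈ Finset.univ.filter (fun I : Finset (Fin r) => Even I.card),
        (-1 : ℝ) ^ (r + sig I) * (∏ i ∈ I, Real.sin (θ i)) * (∏ i ∈ Iᶜ, Real.cos (θ i)) *
          Real.exp (altLen l I) := by
  rw [list_prod_ofFn_apply, sum_filter]
  refine sum_congr rfl fun I _ ↦ ?_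
  have hclosed : switchPath 1 I r = 1 ↔ Even #I := by
    rw [switchPath, countBelow_of_le I le_rfl, add_eq_left, Fin.natCast_eq_zero, even_iff_two_dvd]
  simp only [hclosed]
  split_ifs with hI
  exacts [prod_Amat_switchPath I l θ hI, rfl]
end

section
/- Let n ≥ 1, let f_1,…,f_n be invertible 2×2 real matrices, let γ be any 2×2 real matrix, and define T : ℝ → ℝ by T(z) = Tr( (f_1⁻¹ S(z) f_1)·(f_2⁻¹ S(z) f_2)⋯(f_n⁻¹ S(z) f_n)·γ ). Set A_i = f_i⁻¹ D f_i for 1 ≤ i ≤ n. Then for every k ≥ 0, the k-th derivative of T at 0 equals 2^{−k} · Σ_{r = 0, r ≡ k (mod 2)}^{k} B_{n,k,r} · Σ_{1 ≤ i_1 < i_2 < ⋯ < i_r ≤ n} Tr( A_{i_1} · A_{i_2} ⋯ A_{i_r} · γ ). -/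
open Finset

/-!
Since `S(z) = cosh (z/2) • 1 + sinh (z/2) • D`, each conjugate `fᵢ⁻¹ S(z) fᵢ` equals
`cosh (z/2) • 1 + sinh (z/2) • Aᵢ`, and expanding the ordered product gives
`T(z) = ∑_I cosh (z/2) ^ (n - |I|) * sinh (z/2) ^ |I| * Tr (A_I γ)`.
Write `cosh ^ (n - r) * sinh ^ r` as a product of `n` factors, the first `r` of them `sinh`.
By the multinomial Leibniz rule its `k`-th derivative at `0` is a sum over `q ∈ P(k,n)`
of `(k choose q)` times the `qᵢ`-th derivatives of the factors at `0`, and these are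
`2^(-qᵢ)` or `0` according to the parity of `qᵢ`; what survives is `2^(-k) B_{n,k,r}`.
Finally `B_{n,k,r} = 0` unless `r ≤ k` and `r ≡ k (mod 2)`, since an admissible `q` sums to
`r` plus an even number.
-/

theorem iteratedDeriv_finset_prod {ι 𝕜 𝔸 : Type*} [NontriviallyNormedField 𝕜]
    [NormedCommRing 𝔸] [NormedAlgebra 𝕜 𝔸] [DecidableEq ι]
    (s : Finset ι) (f : ι → 𝕜 → 𝔸) (k : ℕ) (x : 𝕜)
    (hf : ∀ i ∈ s, ContDiffAt 𝕜 k (f i) x) :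
    iteratedDeriv k (fun y => ∏ i ∈ s, f i y) x =
      ∑ q ∈ s.piAntidiag k,
        (Nat.multinomial s q : 𝔸) * ∏ i ∈ s, iteratedDeriv (q i) (f i) x := by
  induction s using Finset.cons_induction generalizing k with
  | empty => cases k <;> simp [iteratedDeriv_const]
  | cons a s ha ih =>
    rw [Finset.forall_mem_cons] at hf
    simp only [prod_cons]
    rw [iteratedDeriv_fun_mul hf.1 (contDiffAt_prod hf.2), piAntidiag_cons, sum_disjiUnion,
      Nat.sum_antidiagonal_eq_sum_range_succ_mk]
    refine sum_congr rfl fun j hj => ?_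
    have hjk : j ≤ k := Nat.lt_succ_iff.mp (mem_range.mp hj)
    rw [ih (k - j) fun i hi => (hf.2 i hi).of_le (by exact_mod_cast k.sub_le j), mul_sum, sum_map]
    refine sum_congr rfl fun q hq => ?_
    rw [mem_piAntidiag] at hq
    have hqa : q a = 0 := by by_contra h; exact ha (hq.2 a h)
    have hs : ∀ i ∈ s, (q + fun t => if t = a then j else 0) i = q i := fun i hi => by
      simp [show i ≠ a from fun h => ha (h ▸ hi)]
    simp only [addRightEmbedding_apply, Nat.multinomial_cons, Nat.multinomial_congr hs,
      sum_congr rfl hs, prod_congr rfl fun i hi => congrArg (iteratedDeriv · (f i) x) (hs i hi)]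
    simp [hqa, hq.1, Nat.add_sub_cancel' hjk]
    ring

theorem pow_sub_mul_pow_eq_prod_fin {R : Type*} [CommMonoid R] {n r : ℕ} (hr : r ≤ n)
    (a b : R) :
    a ^ (n - r) * b ^ r = ∏ i : Fin n, if (i : ℕ) < r then b else a := by
  have hcard := card_filter_add_card_filter_not (s := (univ : Finset (Fin n))) (· < r)
  rw [Fin.card_filter_val_lt, card_univ, Fintype.card_fin, min_eq_right hr] at hcard
  rw [prod_ite, prod_const, prod_const, Fin.card_filter_val_lt, min_eq_right hr,
    show #{i : Fin n | ¬(i : ℕ) < r} = n - r by omega, mul_comm]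

theorem list_prod_map_smul_one_add_smul {ι R A : Type*} [LinearOrder ι] [CommSemiring R]
    [Semiring A] [Algebra R A] (s : Finset ι) (a b : R) (M : ι → A) :
    ((s.sort (· ≤ ·)).map fun i => a • (1 : A) + b • M i).prod =
      ∑ I ∈ s.powerset, (a ^ (#s - #I) * b ^ #I) • ((I.sort (· ≤ ·)).map M).prod := by
  induction s using Finset.induction_on_min with
  | empty => simp
  | insert j s hj ih =>
    have hjs : j ∉ s := fun h => lt_irrefl j (hj j h)
    rw [sort_insert _ (fun x hx => (hj x hx).le) hjs, List.map_cons, List.prod_cons, ih,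
      sum_powerset_insert hjs, add_mul, mul_sum, mul_sum, card_insert_of_notMem hjs]
    congr 1
    · refine sum_congr rfl fun I hI => ?_
      rw [Nat.succ_sub (card_le_card (mem_powerset.mp hI)), smul_mul_assoc, one_mul, smul_smul,
        pow_succ]
      ring_nf
    · refine sum_congr rfl fun I hI => ?_
      have hjI : j ∉ I := fun h => hjs (mem_powerset.mp hI h)
      rw [sort_insert _ (fun x hx => (hj x (mem_powerset.mp hI hx)).le) hjI, List.map_cons,
        List.prod_cons, card_insert_of_notMem hjI, smul_mul_smul_comm, Nat.succ_sub_succ,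
        pow_succ]
      ring_nf

namespace Real

theorem iteratedDeriv_sinh_cosh (m : ℕ) :
    iteratedDeriv m sinh = (if Even m then sinh else cosh) ∧
      iteratedDeriv m cosh = (if Even m then cosh else sinh) := by
  induction m with
  | zero => simp
  | succ m ih =>
    rw [iteratedDeriv_succ', iteratedDeriv_succ', deriv_sinh, deriv_cosh, ih.1, ih.2]
    by_cases hm : Even m <;> simp [hm, Nat.even_add_one]

theorem iteratedDeriv_sinh_half_zero (m : ℕ) :
    iteratedDeriv m (fun z => sinh (z / 2)) 0 = if Odd m then (1 / 2) ^ m else 0 := by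
  simp_rw [div_eq_inv_mul _ (2 : ℝ)]
  rw [iteratedDeriv_comp_const_mul contDiff_sinh, (iteratedDeriv_sinh_cosh m).1]
  rcases Nat.even_or_odd m with hm | hm <;>
    simp [hm, Nat.not_odd_iff_even.mpr, Nat.not_even_iff_odd.mpr]

theorem iteratedDeriv_cosh_half_zero (m : ℕ) :
    iteratedDeriv m (fun z => cosh (z / 2)) 0 = if Even m then (1 / 2) ^ m else 0 := by
  simp_rw [div_eq_inv_mul _ (2 : ℝ)]
  rw [iteratedDeriv_comp_const_mul contDiff_cosh, (iteratedDeriv_sinh_cosh m).2]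
  rcases Nat.even_or_odd m with hm | hm <;> simp [hm, Nat.not_even_iff_odd.mpr]

end Real

theorem Bnkr_eq_sum_piAntidiag (n k r : ℕ) :
    Bnkr n k r = ∑ q ∈ (univ : Finset (Fin n)).piAntidiag k with
      ∀ i : Fin n, ((i : ℕ) < r → Odd (q i)) ∧ (r ≤ (i : ℕ) → Even (q i)),
      Nat.multinomial univ q := by
  rw [Bnkr, Pkn, piAntidiag_univ_fin_eq_antidiagonalTuple]

theorem le_and_mod_two_eq_of_Bnkr_ne_zero {n k r : ℕ} (hr : r ≤ n) (h : Bnkr n k r ≠ 0) :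
    r ≤ k ∧ r % 2 = k % 2 := by
  obtain ⟨q, hq, -⟩ := exists_ne_zero_of_sum_ne_zero (Bnkr_eq_sum_piAntidiag n k r ▸ h)
  rw [mem_filter, mem_piAntidiag] at hq
  obtain ⟨⟨hsum, -⟩, hpar⟩ := hq
  have hdecomp : ∀ i : Fin n, ∃ m, q i = (if (i : ℕ) < r then 1 else 0) + 2 * m := by
    intro i
    by_cases hi : (i : ℕ) < r
    · obtain ⟨m, hm⟩ := (hpar i).1 hi
      exact ⟨m, by rw [if_pos hi, hm]; ring⟩
    · obtain ⟨m, hm⟩ := (hpar i).2 (not_lt.mp hi)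
      exact ⟨m, by rw [if_neg hi, hm]; ring⟩
  choose m hm using hdecomp
  have hk : k = r + 2 * ∑ i, m i := by
    rw [← hsum, sum_congr rfl fun i _ => hm i, sum_add_distrib, sum_boole, ← mul_sum,
      Fin.card_filter_val_lt, min_eq_right hr, Nat.cast_id]
  omega

theorem sum_Bnkr_card_mul_eq_sum_range {n : ℕ} (k : ℕ) (t : Finset (Fin n) → ℝ) :
    ∑ I, (Bnkr n k #I : ℝ) / 2 ^ k * t I =
      (1 / 2 ^ k : ℝ) * ∑ r ∈ (range (k + 1)).filter (fun r => r % 2 = k % 2),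
        (Bnkr n k r : ℝ) * ∑ I ∈ univ.filter (fun I : Finset (Fin n) => #I = r), t I := by
  calc ∑ I, (Bnkr n k #I : ℝ) / 2 ^ k * t I
      = ∑ I with #I ∈ (range (k + 1)).filter (fun r => r % 2 = k % 2),
          (Bnkr n k #I : ℝ) / 2 ^ k * t I := by
        refine (sum_filter_of_ne fun I _ hI => ?_).symm
        obtain ⟨hk, hmod⟩ := le_and_mod_two_eq_of_Bnkr_ne_zero (k := k)
          ((card_le_univ I).trans_eq (Fintype.card_fin n)) fun h => hI (by simp [h])
        exact mem_filter.mpr ⟨mem_range.mpr (Nat.lt_succ_of_le hk), hmod⟩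
    _ = _ := by
        rw [← sum_fiberwise_eq_sum_filter, mul_sum]
        refine sum_congr rfl fun r _ => ?_
        rw [mul_sum, mul_sum]
        refine sum_congr rfl fun I hI => ?_
        rw [(mem_filter.mp hI).2]
        ring

theorem iteratedDeriv_cosh_pow_mul_sinh_pow_zero {n r : ℕ} (hr : r ≤ n) (k : ℕ) :
    iteratedDeriv k (fun z => Real.cosh (z / 2) ^ (n - r) * Real.sinh (z / 2) ^ r) 0 =
      Bnkr n k r / 2 ^ k := by
  let g : Fin n → ℝ → ℝ := fun i z =>
    if (i : ℕ) < r then Real.sinh (z / 2) else Real.cosh (z / 2)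
  have hg_smooth : ∀ i ∈ univ, ContDiffAt ℝ k (g i) 0 := fun i _ => by
    by_cases hi : (i : ℕ) < r <;> simp only [g, hi, if_true, if_false] <;> fun_prop
  have hg_deriv : ∀ (i : Fin n) (m : ℕ), iteratedDeriv m (g i) 0 =
      if ((i : ℕ) < r → Odd m) ∧ (r ≤ (i : ℕ) → Even m) then (1 / 2) ^ m else 0 :=
      fun i m => by
    by_cases hi : (i : ℕ) < r
    · simp [g, hi, Real.iteratedDeriv_sinh_half_zero]
    · simp [g, hi, Real.iteratedDeriv_cosh_half_zero, not_lt.mp hi]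
  simp_rw [pow_sub_mul_pow_eq_prod_fin hr]
  rw [iteratedDeriv_finset_prod univ g k 0 hg_smooth, Bnkr_eq_sum_piAntidiag, Nat.cast_sum,
    sum_filter, sum_div]
  refine sum_congr rfl fun q hq => ?_
  simp only [hg_deriv, prod_ite_zero, mem_univ, true_imp_iff, prod_pow_eq_pow_sum,
    (mem_piAntidiag.mp hq).1]
  split_ifs <;> simp [div_eq_mul_inv]

theorem Smat_eq_cosh_smul_one_add_sinh_smul_Dmat (z : ℝ) :
    Smat z =
      Real.cosh (z / 2) • (1 : Matrix (Fin 2) (Fin 2) ℝ) + Real.sinh (z / 2) • Dmat := by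
  ext i j
  fin_cases i <;> fin_cases j <;> simp [Smat, Dmat, Real.cosh_eq, Real.sinh_eq] <;> ring

theorem inv_mul_Smat_mul {P : Matrix (Fin 2) (Fin 2) ℝ} (hP : IsUnit P) (z : ℝ) :
    P⁻¹ * Smat z * P = Real.cosh (z / 2) • 1 + Real.sinh (z / 2) • (P⁻¹ * Dmat * P) := by
  rw [Smat_eq_cosh_smul_one_add_sinh_smul_Dmat, Matrix.mul_add, Matrix.add_mul, Matrix.mul_smul,
    Matrix.smul_mul, Matrix.mul_one,
    Matrix.nonsing_inv_mul _ ((Matrix.isUnit_iff_isUnit_det P).mp hP), Matrix.mul_smul,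
    Matrix.smul_mul]

theorem trace_prod_conj_Smat_mul_eq_sum {n : ℕ} {f : Fin n → Matrix (Fin 2) (Fin 2) ℝ}
    (hf : ∀ i, IsUnit (f i)) (γ : Matrix (Fin 2) (Fin 2) ℝ) (z : ℝ) :
    Matrix.trace ((List.ofFn fun i : Fin n => (f i)⁻¹ * Smat z * f i).prod * γ) =
      ∑ I : Finset (Fin n), Real.cosh (z / 2) ^ (n - #I) * Real.sinh (z / 2) ^ #I *
        Matrix.trace (((I.sort (· ≤ ·)).map fun i => (f i)⁻¹ * Dmat * f i).prod * γ) := by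
  simp_rw [inv_mul_Smat_mul (hf _)]
  rw [List.ofFn_eq_map, ← Fin.sort_univ, list_prod_map_smul_one_add_smul, powerset_univ,
    card_univ, Fintype.card_fin, Matrix.sum_mul, Matrix.trace_sum]
  simp_rw [Matrix.smul_mul, Matrix.trace_smul, smul_eq_mul]

theorem iteratedDeriv_trace_eq_sum_Bnkr_general (n k : ℕ)
    (f : Fin n → Matrix (Fin 2) (Fin 2) ℝ) (hf : ∀ i, IsUnit (f i))
    (γ : Matrix (Fin 2) (Fin 2) ℝ) :
    iteratedDeriv k
      (fun z : ℝ =>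
        Matrix.trace ((List.ofFn fun i : Fin n => (f i)⁻¹ * Smat z * f i).prod * γ)) 0 =
    (1 / 2 ^ k : ℝ) * ∑ r ∈ (Finset.range (k + 1)).filter (fun r => r % 2 = k % 2),
      (Bnkr n k r : ℝ) * ∑ I ∈ Finset.univ.filter (fun I : Finset (Fin n) => I.card = r),
        Matrix.trace (((I.sort (· ≤ ·)).map fun i => (f i)⁻¹ * Dmat * f i).prod * γ) := by
  simp_rw [trace_prod_conj_Smat_mul_eq_sum hf γ]
  rw [iteratedDeriv_fun_sum fun I _ => by fun_prop]
  simp_rw [iteratedDeriv_mul_const_field]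
  rw [← sum_Bnkr_card_mul_eq_sum_range]
  refine sum_congr rfl fun I _ => ?_
  rw [iteratedDeriv_cosh_pow_mul_sinh_pow_zero (by simpa using card_le_univ I)]

/-- the `k`-th derivative of the trace function, grouped by the number `r` of
odd entries. -/
theorem iteratedDeriv_trace_eq_sum_Bnkr (n k : ℕ) (hn : 1 ≤ n)
    (f : Fin n → Matrix (Fin 2) (Fin 2) ℝ) (hf : ∀ i, IsUnit (f i))
    (γ : Matrix (Fin 2) (Fin 2) ℝ) :
    iteratedDeriv k
      (fun z : ℝ =>
        Matrix.trace ((List.ofFn fun i : Fin n => (f i)⁻¹ * Smat z * f i).prod * γ)) 0 =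
    (1 / 2 ^ k : ℝ) * ∑ r ∈ (Finset.range (k + 1)).filter (fun r => r % 2 = k % 2),
      (Bnkr n k r : ℝ) * ∑ I ∈ Finset.univ.filter (fun I : Finset (Fin n) => I.card = r),
        Matrix.trace (((I.sort (· ≤ ·)).map fun i => (f i)⁻¹ * Dmat * f i).prod * γ) :=
  iteratedDeriv_trace_eq_sum_Bnkr_general n k f hf γ
end

section
/- Let l_1, l_2, θ_1, θ_2, L be real numbers. Then Tr( A(l_1,θ_1) · A(l_2,θ_2) · γ_L ) = 2( cos θ_1 cos θ_2 cosh(L/2) + sin θ_1 sin θ_2 cosh(L/2 − (l_2 − l_1)) ). -/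
open Finset

/-! `Tr(A₁ A₂ γ_L)` only sees the diagonal of `A₁ A₂`, whose entries are
`cos θ₁ cos θ₂ + e^{±(l₁ - l₂)} sin θ₁ sin θ₂`; weighting them by `e^{±L/2}` and pairing the
exponentials gives the two hyperbolic cosines. -/

open Matrix Real

theorem Matrix.trace_mul_diagonal {n α : Type*} [Fintype n] [DecidableEq n]
    [NonUnitalNonAssocSemiring α] (M : Matrix n n α) (d : n → α) :
    trace (M * diagonal d) = ∑ i, M i i * d i := by
  simp only [trace, diag_apply, mul_diagonal]

theorem gammaMat_eq_diagonal (L : ℝ) :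
    gammaMat L = diagonal ![exp (L / 2), exp (-(L / 2))] := by
  ext i j
  fin_cases i <;> fin_cases j <;> simp [gammaMat]

section Amat

variable (l₁ l₂ θ₁ θ₂ : ℝ)

theorem Amat_mul_Amat_apply_zero_zero :
    (Amat l₁ θ₁ * Amat l₂ θ₂) 0 0 = cos θ₁ * cos θ₂ + exp (l₁ - l₂) * (sin θ₁ * sin θ₂) := by
  simp only [Amat, mul_apply, Fin.sum_univ_two, of_apply, cons_val', cons_val_fin_one,
    cons_val_zero, cons_val_one, exp_neg, exp_sub]
  field_simp

theorem Amat_mul_Amat_apply_one_one :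
    (Amat l₁ θ₁ * Amat l₂ θ₂) 1 1 = cos θ₁ * cos θ₂ + exp (-(l₁ - l₂)) * (sin θ₁ * sin θ₂) := by
  simp only [Amat, mul_apply, Fin.sum_univ_two, of_apply, cons_val', cons_val_fin_one,
    cons_val_zero, cons_val_one, exp_neg, exp_sub]
  field_simp
  ring

end Amat

/-- `Tr(A(l₁,θ₁)·A(l₂,θ₂)·γ_L)`. -/
theorem trace_Amat_Amat_gammaMat (l₁ l₂ θ₁ θ₂ L : ℝ) :
    Matrix.trace (Amat l₁ θ₁ * Amat l₂ θ₂ * gammaMat L) =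
      2 * (Real.cos θ₁ * Real.cos θ₂ * Real.cosh (L / 2) +
        Real.sin θ₁ * Real.sin θ₂ * Real.cosh (L / 2 - (l₂ - l₁))) := by
  have hplus : exp (L / 2) * exp (l₁ - l₂) = exp (L / 2 - (l₂ - l₁)) := by
    rw [← exp_add]; ring_nf
  have hminus : exp (-(L / 2)) * exp (-(l₁ - l₂)) = exp (-(L / 2 - (l₂ - l₁))) := by
    rw [← exp_add]; ring_nf
  rw [gammaMat_eq_diagonal, trace_mul_diagonal, Fin.sum_univ_two, Amat_mul_Amat_apply_zero_zero,
    Amat_mul_Amat_apply_one_one, cosh_eq, cosh_eq]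
  simp only [cons_val_zero, cons_val_one]
  linear_combination (sin θ₁ * sin θ₂) * (hplus + hminus)
end

section
/- Let n ≥ 1, let l_1,…,l_n, θ_1,…,θ_n, L be real numbers, let f_1,…,f_n be invertible 2×2 real matrices satisfying f_i⁻¹ D f_i = A(l_i, θ_i) for each i, and define T : ℝ → ℝ by T(z) = Tr( (f_1⁻¹ S(z) f_1)⋯(f_n⁻¹ S(z) f_n)·γ_L ). Then the second derivative of T at 0 equals Σ_{1 ≤ i < j ≤ n} ( cos θ_i cos θ_j cosh(L/2) + sin θ_i sin θ_j cosh(L/2 − (l_j − l_i)) ) + n·cosh(L/2)/2. -/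
open Finset

/-!
Since `D² = 1`, `S(z) = cosh (z/2) • 1 + sinh (z/2) • D`, so each factor `f_i⁻¹ S(z) f_i` equals
`cosh (z/2) • 1 + sinh (z/2) • A_i`, whose value, first and second derivative at `0` are
`1`, `A_i / 2` and `1 / 4`. The Leibniz rule then gives, by induction on `n`, that the second
derivative of the product at `0` is `(n / 4) • 1 + (1 / 2) • ∑_{i<j} A_i A_j`; taking the trace
against `γ_L` and computing `tr (A_i A_j γ_L)` explicitly gives the formula.
-/

open Real

theorem hasDerivAt_cosh_half_smul_add_sinh_half_smul {E : Type*} [NormedAddCommGroup E]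
    [NormedSpace ℝ E] (x y : E) (z : ℝ) :
    HasDerivAt (fun z => cosh (z / 2) • x + sinh (z / 2) • y)
      ((2⁻¹ : ℝ) • (sinh (z / 2) • x + cosh (z / 2) • y)) z := by
  have hhalf : HasDerivAt (fun z : ℝ => z / 2) 2⁻¹ z := by
    simpa using (hasDerivAt_id z).div_const 2
  refine ((((hasDerivAt_cosh _).comp z hhalf).smul_const x).add
    (((hasDerivAt_sinh _).comp z hhalf).smul_const y)).congr_deriv ?_
  module

section CoshSinh

variable {𝔸 : Type*}

-- This is `exp ((z / 2) • a)` when `a ^ 2 = 1`.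
noncomputable def coshSinh [Ring 𝔸] [Algebra ℝ 𝔸] (a : 𝔸) (z : ℝ) : 𝔸 :=
  cosh (z / 2) • 1 + sinh (z / 2) • a

noncomputable def prodCoshSinh [Ring 𝔸] [Algebra ℝ 𝔸] {n : ℕ} (v : Fin n → 𝔸) (z : ℝ) : 𝔸 :=
  (List.ofFn fun i => coshSinh (v i) z).prod

theorem mul_coshSinh_mul_of_mul_eq_one [Ring 𝔸] [Algebra ℝ 𝔸] {b c : 𝔸} (h : c * b = 1)
    (a : 𝔸) (z : ℝ) : c * coshSinh a z * b = coshSinh (c * a * b) z := by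
  simp only [coshSinh, mul_add, add_mul, mul_smul_comm, smul_mul_assoc, mul_one, h]

theorem prodCoshSinh_fin_zero [Ring 𝔸] [Algebra ℝ 𝔸] (v : Fin 0 → 𝔸) :
    prodCoshSinh v = fun _ => 1 :=
  funext fun _ => by simp [prodCoshSinh]

theorem prodCoshSinh_succ [Ring 𝔸] [Algebra ℝ 𝔸] {n : ℕ} (v : Fin (n + 1) → 𝔸) :
    prodCoshSinh v = coshSinh (v 0) * prodCoshSinh (Fin.tail v) := by
  funext z
  simp [prodCoshSinh, List.ofFn_succ, Fin.tail]

variable [NormedRing 𝔸] [NormedAlgebra ℝ 𝔸]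

theorem contDiff_coshSinh (a : 𝔸) {k : WithTop ℕ∞} : ContDiff ℝ k (coshSinh a) := by
  unfold coshSinh; fun_prop

theorem coshSinh_apply_zero (a : 𝔸) : coshSinh a 0 = 1 := by
  simp [coshSinh]

theorem deriv_coshSinh (a : 𝔸) :
    deriv (coshSinh a) = fun z => (2⁻¹ : ℝ) • (sinh (z / 2) • 1 + cosh (z / 2) • a) :=
  funext fun z => (hasDerivAt_cosh_half_smul_add_sinh_half_smul 1 a z).deriv

theorem deriv_coshSinh_zero (a : 𝔸) : deriv (coshSinh a) 0 = (2⁻¹ : ℝ) • a := by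
  simp [deriv_coshSinh]

theorem iteratedDeriv_two_coshSinh_zero (a : 𝔸) :
    iteratedDeriv 2 (coshSinh a) 0 = (4⁻¹ : ℝ) • 1 := by
  have hderiv :
      deriv (coshSinh a) = fun z => (2⁻¹ : ℝ) • (cosh (z / 2) • a + sinh (z / 2) • 1) := by
    simp only [deriv_coshSinh, add_comm]
  rw [iteratedDeriv_succ, iteratedDeriv_one, hderiv,
    ((hasDerivAt_cosh_half_smul_add_sinh_half_smul a 1 0).fun_const_smul (2⁻¹ : ℝ)).deriv]
  norm_num [smul_smul]

theorem iteratedDeriv_two_mul {f g : ℝ → 𝔸} {x : ℝ} (hf : ContDiffAt ℝ 2 f x)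
    (hg : ContDiffAt ℝ 2 g x) :
    iteratedDeriv 2 (f * g) x =
      f x * iteratedDeriv 2 g x + 2 * (deriv f x * deriv g x) + iteratedDeriv 2 f x * g x := by
  simp [iteratedDeriv_mul hf hg, Finset.sum_range_succ, mul_assoc]

theorem contDiff_prodCoshSinh {n : ℕ} (v : Fin n → 𝔸) {k : WithTop ℕ∞} :
    ContDiff ℝ k (prodCoshSinh v) := by
  induction n with
  | zero => rw [prodCoshSinh_fin_zero]; exact contDiff_const
  | succ n ih => rw [prodCoshSinh_succ]; exact (contDiff_coshSinh _).mul (ih _)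

theorem prodCoshSinh_apply_zero {n : ℕ} (v : Fin n → 𝔸) : prodCoshSinh v 0 = 1 := by
  simp [prodCoshSinh, coshSinh_apply_zero]

theorem deriv_prodCoshSinh_zero {n : ℕ} (v : Fin n → 𝔸) :
    deriv (prodCoshSinh v) 0 = (2⁻¹ : ℝ) • ∑ i, v i := by
  induction n with
  | zero => simp [prodCoshSinh_fin_zero]
  | succ n ih =>
    rw [prodCoshSinh_succ, deriv_mul ((contDiff_coshSinh _ (k := 1)).differentiable one_ne_zero _)
      ((contDiff_prodCoshSinh _ (k := 1)).differentiable one_ne_zero _), deriv_coshSinh_zero,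
      coshSinh_apply_zero, prodCoshSinh_apply_zero, ih, Fin.sum_univ_succ, smul_add]
    simp only [mul_one, one_mul, Fin.tail]

theorem iteratedDeriv_two_prodCoshSinh_zero {n : ℕ} (v : Fin n → 𝔸) :
    iteratedDeriv 2 (prodCoshSinh v) 0 =
      (n / 4 : ℝ) • 1 + (2⁻¹ : ℝ) • ∑ i, ∑ j ∈ Finset.Ioi i, v i * v j := by
  induction n with
  | zero => simp [prodCoshSinh_fin_zero, iteratedDeriv_const]
  | succ n ih =>
    rw [prodCoshSinh_succ, iteratedDeriv_two_mul (contDiff_coshSinh _).contDiffAt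
      (contDiff_prodCoshSinh _).contDiffAt, iteratedDeriv_two_coshSinh_zero, deriv_coshSinh_zero,
      coshSinh_apply_zero, deriv_prodCoshSinh_zero, prodCoshSinh_apply_zero, ih,
      Fin.sum_univ_succ, Fin.sum_Ioi_zero]
    simp only [Fin.sum_Ioi_succ, Fin.tail, Finset.mul_sum, smul_mul_smul_comm, two_mul, mul_one,
      one_mul]
    push_cast
    module

end CoshSinh

theorem ContinuousLinearMap.iteratedDeriv_comp_left {E F : Type*} [NormedAddCommGroup E]
    [NormedSpace ℝ E] [NormedAddCommGroup F] [NormedSpace ℝ F] (g : E →L[ℝ] F) {f : ℝ → E}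
    {x : ℝ} {k : ℕ} (hf : ContDiffAt ℝ k f x) :
    iteratedDeriv k (g ∘ f) x = g (iteratedDeriv k f x) := by
  simp [iteratedDeriv_eq_iteratedFDeriv, g.iteratedFDeriv_comp_left hf le_rfl]

open scoped Matrix.Norms.Operator in
theorem iteratedDeriv_two_trace_prodCoshSinh_mul {m : Type*} [Fintype m] [DecidableEq m] {n : ℕ}
    (v : Fin n → Matrix m m ℝ) (g : Matrix m m ℝ) :
    iteratedDeriv 2 (fun z => (prodCoshSinh v z * g).trace) 0 =
      n / 4 * g.trace + 2⁻¹ * ∑ i, ∑ j ∈ Finset.Ioi i, (v i * v j * g).trace := by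
  let φ : Matrix m m ℝ →L[ℝ] ℝ :=
    (Matrix.traceLinearMap m ℝ ℝ ∘ₗ LinearMap.mulRight ℝ g).toContinuousLinearMap
  refine (φ.iteratedDeriv_comp_left (contDiff_prodCoshSinh v).contDiffAt).trans ?_
  rw [iteratedDeriv_two_prodCoshSinh_zero]
  change (_ * g).trace = _
  simp only [Matrix.add_mul, Matrix.smul_mul, Matrix.one_mul, Matrix.trace_add,
    Matrix.trace_smul, Finset.sum_mul, Matrix.trace_sum, smul_eq_mul]

theorem Smat_eq_coshSinh (z : ℝ) : Smat z = coshSinh Dmat z := by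
  ext i j
  fin_cases i <;> fin_cases j <;> simp [Smat, Dmat, coshSinh, cosh_eq, sinh_eq] <;> ring

theorem trace_gammaMat (L : ℝ) : (gammaMat L).trace = 2 * cosh (L / 2) := by
  rw [gammaMat, Matrix.trace_fin_two_of, cosh_eq]; ring

theorem trace_Amat_mul_Amat_mul_gammaMat (l₁ l₂ θ₁ θ₂ L : ℝ) :
    (Amat l₁ θ₁ * Amat l₂ θ₂ * gammaMat L).trace =
      2 * (cos θ₁ * cos θ₂ * cosh (L / 2) + sin θ₁ * sin θ₂ * cosh (L / 2 - (l₂ - l₁))) := by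
  rw [Amat, Amat, gammaMat, Matrix.mul_fin_two, Matrix.mul_fin_two, Matrix.trace_fin_two_of,
    cosh_eq, cosh_eq]
  simp only [exp_sub, exp_neg]
  field_simp
  ring

theorem iteratedDeriv_two_trace_eq_general (n : ℕ) (l θ : Fin n → ℝ) (L : ℝ)
    (f : Fin n → Matrix (Fin 2) (Fin 2) ℝ) (hf : ∀ i, IsUnit (f i))
    (hA : ∀ i, (f i)⁻¹ * Dmat * f i = Amat (l i) (θ i)) :
    iteratedDeriv 2
      (fun z : ℝ =>
        Matrix.trace
          ((List.ofFn fun i : Fin n => (f i)⁻¹ * Smat z * f i).prod * gammaMat L)) 0 =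
    (∑ i : Fin n, ∑ j ∈ Finset.Ioi i,
        (Real.cos (θ i) * Real.cos (θ j) * Real.cosh (L / 2) +
          Real.sin (θ i) * Real.sin (θ j) * Real.cosh (L / 2 - (l j - l i)))) +
      n * Real.cosh (L / 2) / 2 := by
  have hconj (z : ℝ) : (List.ofFn fun i => (f i)⁻¹ * Smat z * f i).prod =
      prodCoshSinh (fun i => Amat (l i) (θ i)) z := by
    simp only [prodCoshSinh, Smat_eq_coshSinh, ← hA, mul_coshSinh_mul_of_mul_eq_one
      (Matrix.nonsing_inv_mul _ ((Matrix.isUnit_iff_isUnit_det _).mp (hf _)))]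
  simp only [hconj, iteratedDeriv_two_trace_prodCoshSinh_mul, trace_gammaMat,
    trace_Amat_mul_Amat_mul_gammaMat, Finset.mul_sum, inv_mul_cancel_left₀ (two_ne_zero' ℝ)]
  ring

/-- second derivative of `T` at `0`. -/
theorem iteratedDeriv_two_trace_eq (n : ℕ) (hn : 1 ≤ n) (l θ : Fin n → ℝ) (L : ℝ)
    (f : Fin n → Matrix (Fin 2) (Fin 2) ℝ) (hf : ∀ i, IsUnit (f i))
    (hA : ∀ i, (f i)⁻¹ * Dmat * f i = Amat (l i) (θ i)) :
    iteratedDeriv 2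
      (fun z : ℝ =>
        Matrix.trace
          ((List.ofFn fun i : Fin n => (f i)⁻¹ * Smat z * f i).prod * gammaMat L)) 0 =
    (∑ i : Fin n, ∑ j ∈ Finset.Ioi i,
        (Real.cos (θ i) * Real.cos (θ j) * Real.cosh (L / 2) +
          Real.sin (θ i) * Real.sin (θ j) * Real.cosh (L / 2 - (l j - l i)))) +
      n * Real.cosh (L / 2) / 2 :=
  iteratedDeriv_two_trace_eq_general n l θ L f hf hA
end
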